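/- A linear map φ : M_a → M_b is completely positive (i.e., id_k ⊗ φ is positive for all k) if and only if its Choi matrix C_φ is positive semidefinite. -/

import Mathlib

open Matrix Kronecker BigOperators
open scoped ComplexOrder

noncomputable def choi {a b : ℕ}
    (φ : Matrix (Fin a) (Fin a) ℂ →ₗ[ℂ] Matrix (Fin b) (Fin b) ℂ) :
    Matrix (Fin a × Fin b) (Fin a × Fin b) ℂ :=
  ∑ i : Fin a, ∑ j : Fin a,
    (Matrix.single i j (1 : ℂ)) ⊗ₖ φ (Matrix.single i j (1 : ℂ))

noncomputable def tensorMap {a₁ b₁ a₂ b₂ : ℕ}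
    (φ₁ : Matrix (Fin a₁) (Fin a₁) ℂ →ₗ[ℂ] Matrix (Fin b₁) (Fin b₁) ℂ)
    (φ₂ : Matrix (Fin a₂) (Fin a₂) ℂ →ₗ[ℂ] Matrix (Fin b₂) (Fin b₂) ℂ)
    (M : Matrix (Fin a₁ × Fin a₂) (Fin a₁ × Fin a₂) ℂ) :
    Matrix (Fin b₁ × Fin b₂) (Fin b₁ × Fin b₂) ℂ :=
  ∑ i : Fin a₁, ∑ j : Fin a₁,
    (φ₁ (Matrix.single i j (1 : ℂ))) ⊗ₖ
      (φ₂ (Matrix.of fun k l => M (i, k) (j, l)))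

noncomputable def adS {a b : ℕ} (s : Matrix (Fin a) (Fin b) ℂ) :
    Matrix (Fin a) (Fin a) ℂ →ₗ[ℂ] Matrix (Fin b) (Fin b) ℂ where
  toFun x := sᴴ * x * s
  map_add' x y := by simp [Matrix.mul_add, Matrix.add_mul]
  map_smul' c x := by simp [Matrix.mul_smul, Matrix.smul_mul]

noncomputable def pairM {n : Type*} [Fintype n] (x y : Matrix n n ℂ) : ℂ := (x * yᵀ).trace

/-!
Feeding `id_a ⊗ φ` the rank-one projection onto the unnormalised maximally entangled vector
`vec 1 = Σᵢ eᵢ ⊗ eᵢ` returns the Choi matrix, so complete positivity forces `C_φ ≥ 0`.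
Conversely, `(id_k ⊗ φ)(ρ)` is the compression `Vᴴ (ρ ⊗ C_φ) V` of `ρ ⊗ C_φ` by the matrix `V`
that contracts the two middle indices, hence it is positive semidefinite whenever `ρ` and `C_φ`
are.
-/

namespace Matrix

variable (R : Type*) (m n p : Type*) [DecidableEq m] [DecidableEq n] [DecidableEq p]

def contractMiddle [Zero R] [One R] : Matrix ((m × n) × (n × p)) (m × p) R :=
  of fun x y => if x.1.1 = y.1 ∧ x.1.2 = x.2.1 ∧ x.2.2 = y.2 then 1 else 0

variable {R m n p}

lemma conjTranspose_contractMiddle_mul_mul_apply [Fintype m] [Fintype n] [Fintype p]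
    [NonAssocSemiring R] [StarRing R]
    (M : Matrix ((m × n) × (n × p)) ((m × n) × (n × p)) R) (x y : m × p) :
    ((contractMiddle R m n p)ᴴ * M * contractMiddle R m n p) x y =
      ∑ i, ∑ j, M ((x.1, i), (i, x.2)) ((y.1, j), (j, y.2)) := by
  simp [mul_apply, contractMiddle, Fintype.sum_prod_type, ite_and, apply_ite (star : R → R)]
  exact Finset.sum_comm

end Matrix

section

variable {a b : ℕ} (φ : Matrix (Fin a) (Fin a) ℂ →ₗ[ℂ] Matrix (Fin b) (Fin b) ℂ)

lemma choi_apply (i j : Fin a) (k l : Fin b) :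
    choi φ (i, k) (j, l) = φ (single i j 1) k l := by
  simp only [choi, Matrix.sum_apply, kroneckerMap_apply, single, of_apply]
  rw [Finset.sum_eq_single i, Finset.sum_eq_single j] <;> simp +contextual [eq_comm]

lemma tensorMap_id_apply {k : ℕ} (ρ : Matrix (Fin k × Fin a) (Fin k × Fin a) ℂ)
    (p q : Fin k) (r s : Fin b) :
    tensorMap LinearMap.id φ ρ (p, r) (q, s) =
      ∑ i, ∑ j, ρ (p, i) (q, j) * φ (single i j 1) r s := by
  have hblock : (of fun i j => ρ (p, i) (q, j)) = ∑ i, ∑ j, ρ (p, i) (q, j) • single i j 1 := by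
    conv_lhs => rw [matrix_eq_sum_single (of fun i j => ρ (p, i) (q, j))]
    simp [smul_single]
  have hsum : tensorMap LinearMap.id φ ρ (p, r) (q, s) = φ (of fun i j => ρ (p, i) (q, j)) r s := by
    simp [tensorMap, Matrix.sum_apply, single_apply, ite_and]
  rw [hsum, hblock]
  simp only [map_sum, map_smul, Matrix.sum_apply, Matrix.smul_apply, smul_eq_mul]

lemma tensorMap_id_eq_contractMiddle_kronecker_choi {k : ℕ}
    (ρ : Matrix (Fin k × Fin a) (Fin k × Fin a) ℂ) :
    tensorMap LinearMap.id φ ρ =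
      (contractMiddle ℂ (Fin k) (Fin a) (Fin b))ᴴ * (ρ ⊗ₖ choi φ) *
        contractMiddle ℂ (Fin k) (Fin a) (Fin b) := by
  ext ⟨p, r⟩ ⟨q, s⟩
  simp [tensorMap_id_apply, conjTranspose_contractMiddle_mul_mul_apply, choi_apply]

lemma tensorMap_id_vecMulVec_vec_one :
    tensorMap LinearMap.id φ (vecMulVec (vec 1) (star (vec 1))) = choi φ := by
  ext ⟨p, r⟩ ⟨q, s⟩
  simp [tensorMap_id_apply, choi_apply, vecMulVec_apply, vec, one_apply]

end

/-- A linear map is completely positive iff its Choi matrix is positive semidefinite. -/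
theorem stmt_9 {a b : ℕ}
    (φ : Matrix (Fin a) (Fin a) ℂ →ₗ[ℂ] Matrix (Fin b) (Fin b) ℂ) :
    (∀ (k : ℕ) (ρ : Matrix (Fin k × Fin a) (Fin k × Fin a) ℂ), ρ.PosSemidef →
      (tensorMap (LinearMap.id : Matrix (Fin k) (Fin k) ℂ →ₗ[ℂ] Matrix (Fin k) (Fin k) ℂ)
        φ ρ).PosSemidef) ↔
    (choi φ).PosSemidef := by
  refine ⟨fun hCP => ?_, fun hC k ρ hρ => ?_⟩
  · rw [← tensorMap_id_vecMulVec_vec_one]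
    exact hCP a _ (posSemidef_vecMulVec_self_star _)
  · rw [tensorMap_id_eq_contractMiddle_kronecker_choi]
    exact (hρ.kronecker hC).conjTranspose_mul_mul_same _
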